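/- arXiv:2005.08897 — 3 statements merged into one kernel-verified Lean document; each statement's English description precedes it below -/
import Mathlib

section
/- For a compact subset K of ℝ^d, the moment map sending a finite signed Borel measure μ on K to the sequence (∫ x^{⊗m} μ(dx))_{m≥0} in ∏_{m≥0} (ℝ^d)^{⊗m} is injective. -/
open MeasureTheory

section Aux

variable {K : Type*} [TopologicalSpace K] [CompactSpace K] [MeasurableSpace K]
  [OpensMeasurableSpace K]

lemma aux_integrable (m : Measure K) [IsFiniteMeasure m] (f : C(K, ℝ)) :
    Integrable f m := by
  have := (BoundedContinuousFunction.mkOfCompact f).integrable m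
  exact this

lemma aux_continuous_integral (m : Measure K) [IsFiniteMeasure m] :
    Continuous fun f : C(K, ℝ) => ∫ x, f x ∂m := by
  have : LipschitzWith (m Set.univ).toNNReal (fun f : C(K, ℝ) => ∫ x, f x ∂m) := by
    apply LipschitzWith.of_dist_le_mul
    intro f g
    rw [dist_eq_norm, dist_eq_norm, ← integral_sub (aux_integrable m f) (aux_integrable m g)]
    calc ‖∫ x, (f x - g x) ∂m‖ ≤ ‖f - g‖ * (m Set.univ).toReal := by
          apply norm_integral_le_of_norm_le_const
          filter_upwards with x
          simpa using ContinuousMap.norm_coe_le_norm (f - g) x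
      _ = ((m Set.univ).toNNReal : ℝ) * ‖f - g‖ := by
          rw [mul_comm]; rfl
  exact this.continuous

end Aux

/-- For a compact subset `K ⊆ ℝ^d`, the moment map sending a finite signed Borel measure
`μ` on `K` (written as a difference `μ₁ - μ₂` of finite Borel measures) to its sequence of
tensor moments `(∫ x^{⊗m} dμ)_{m≥0}` (written in coordinates: for every `m` and every
multi-index `i : Fin m → Fin d`, the moment `∫ ∏_j x_{i_j} dμ`) is injective. -/
theorem stmt1 (d : ℕ) (K : Set (Fin d → ℝ)) (hK : IsCompact K)
    (μ₁ μ₂ ν₁ ν₂ : Measure K)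
    [IsFiniteMeasure μ₁] [IsFiniteMeasure μ₂] [IsFiniteMeasure ν₁] [IsFiniteMeasure ν₂]
    (h : ∀ (m : ℕ) (i : Fin m → Fin d),
      (∫ x : K, ∏ j, (x : Fin d → ℝ) (i j) ∂μ₁) - (∫ x : K, ∏ j, (x : Fin d → ℝ) (i j) ∂μ₂)
        = (∫ x : K, ∏ j, (x : Fin d → ℝ) (i j) ∂ν₁)
          - (∫ x : K, ∏ j, (x : Fin d → ℝ) (i j) ∂ν₂)) :
    μ₁.toSignedMeasure - μ₂.toSignedMeasure = ν₁.toSignedMeasure - ν₂.toSignedMeasure := by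
  haveI : CompactSpace K := isCompact_iff_compactSpace.mp hK
  set μ : Measure K := μ₁ + ν₂ with hμ
  set ν : Measure K := ν₁ + μ₂ with hν
  -- coordinate functions
  let X : Fin d → C(K, ℝ) := fun i =>
    ⟨fun x => (x : Fin d → ℝ) i, ((continuous_apply i).comp continuous_subtype_val)⟩
  -- every element of the multiplicative closure of coordinates is a monomial
  have hmono : ∀ f ∈ Submonoid.closure (Set.range X),
      ∃ (m : ℕ) (i : Fin m → Fin d), ∀ x : K, f x = ∏ j, (x : Fin d → ℝ) (i j) := by
    intro f hf
    induction hf using Submonoid.closure_induction with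
    | mem f hf =>
        obtain ⟨i, rfl⟩ := hf
        exact ⟨1, fun _ => i, fun x => by simp [X]⟩
    | one => exact ⟨0, Fin.elim0, fun x => by simp⟩
    | mul f g _ _ hf hg =>
        obtain ⟨m, i, hi⟩ := hf
        obtain ⟨m', i', hi'⟩ := hg
        refine ⟨m + m', Fin.append i i', fun x => ?_⟩
        rw [ContinuousMap.mul_apply, hi, hi', Fin.prod_univ_add]
        simp
  -- monomials have equal integrals under μ and ν
  have hmom : ∀ (m : ℕ) (i : Fin m → Fin d),
      (∫ x : K, ∏ j, (x : Fin d → ℝ) (i j) ∂μ) = ∫ x : K, ∏ j, (x : Fin d → ℝ) (i j) ∂ν := by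
    intro m i
    have hcont : Continuous fun x : K => ∏ j, (x : Fin d → ℝ) (i j) :=
      continuous_finset_prod _ fun j _ =>
        (continuous_apply (i j)).comp continuous_subtype_val
    have hint : ∀ (m' : Measure K) [IsFiniteMeasure m'],
        Integrable (fun x : K => ∏ j, (x : Fin d → ℝ) (i j)) m' := fun m' _ =>
      aux_integrable m' ⟨_, hcont⟩
    rw [hμ, hν, integral_add_measure (hint μ₁) (hint ν₂),
      integral_add_measure (hint ν₁) (hint μ₂)]
    have := h m i
    linarith
  -- the set of continuous functions with equal integrals
  have hS : ∀ f : C(K, ℝ), ∫ x, f x ∂μ = ∫ x, f x ∂ν := by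
    set S : Set C(K, ℝ) := {f | ∫ x, f x ∂μ = ∫ x, f x ∂ν} with hSdef
    have hSclosed : IsClosed S :=
      isClosed_eq (aux_continuous_integral μ) (aux_continuous_integral ν)
    set A : Subalgebra ℝ C(K, ℝ) := Algebra.adjoin ℝ (Set.range X) with hA
    have hsep : A.SeparatesPoints := by
      intro x y hxy
      obtain ⟨i, hi⟩ := Function.ne_iff.mp (Subtype.coe_injective.ne hxy)
      exact ⟨X i, ⟨X i, Algebra.subset_adjoin ⟨i, rfl⟩, rfl⟩, hi⟩
    have hAS : (A : Set C(K, ℝ)) ⊆ S := by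
      intro f hf
      have hf' : f ∈ Submodule.span ℝ (Submonoid.closure (Set.range X) : Set C(K, ℝ)) := by
        rw [← Algebra.adjoin_eq_span]; exact hf
      clear hf
      induction hf' using Submodule.span_induction with
      | mem g hg =>
          obtain ⟨m, i, hi⟩ := hmono g hg
          show ∫ x, g x ∂μ = ∫ x, g x ∂ν
          simp only [funext hi]
          exact hmom m i
      | zero => show (∫ x, (0 : C(K, ℝ)) x ∂μ) = _; simp
      | add g₁ g₂ _ _ h₁ h₂ =>
          show ∫ x, (g₁ + g₂) x ∂μ = ∫ x, (g₁ + g₂) x ∂ν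
          simp only [ContinuousMap.add_apply]
          rw [integral_add (aux_integrable μ g₁) (aux_integrable μ g₂),
            integral_add (aux_integrable ν g₁) (aux_integrable ν g₂)]
          exact congrArg₂ (· + ·) h₁ h₂
      | smul c g _ hg =>
          show ∫ x, (c • g) x ∂μ = ∫ x, (c • g) x ∂ν
          simp only [ContinuousMap.smul_apply, smul_eq_mul]
          rw [integral_const_mul, integral_const_mul]
          exact congrArg (c * ·) hg
    intro f
    have htop := ContinuousMap.subalgebra_topologicalClosure_eq_top_of_separatesPoints A hsep
    have hfmem : f ∈ A.topologicalClosure := by rw [htop]; trivial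
    have : f ∈ closure (A : Set C(K, ℝ)) := hfmem
    exact closure_minimal hAS hSclosed this
  -- conclude measures are equal
  have key : μ = ν := by
    apply ext_of_forall_lintegral_eq_of_IsFiniteMeasure
    intro f
    have h1 : ∫⁻ x, f x ∂μ ≠ ⊤ := (f.lintegral_lt_top_of_nnreal μ).ne
    have h2 : ∫⁻ x, f x ∂ν ≠ ⊤ := (f.lintegral_lt_top_of_nnreal ν).ne
    rw [← ENNReal.toReal_eq_toReal_iff' h1 h2,
      BoundedContinuousFunction.toReal_lintegral_coe_eq_integral,
      BoundedContinuousFunction.toReal_lintegral_coe_eq_integral]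
    exact hS ⟨fun x => (f x : ℝ), NNReal.continuous_coe.comp f.continuous⟩
  rw [sub_eq_sub_iff_add_eq_add, ← Measure.toSignedMeasure_add, ← Measure.toSignedMeasure_add]
  exact Measure.toSignedMeasure_congr key
end

section
/- Let X, X_n (n ∈ ℕ) be random variables taking values in a fixed compact subset K of ℝ^d. If for every m ≥ 0 the expected tensor moments E[X_n^{⊗m}] converge to E[X^{⊗m}] in (ℝ^d)^{⊗m}, then X_n converges weakly (in distribution) to X. -/
open MeasureTheory Filter

private lemma prod_pow_repr (d : ℕ) (k : Fin d → ℕ) :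
    ∃ (m : ℕ) (i : Fin m → Fin d), ∀ x : Fin d → ℝ,
      (∏ t, x t ^ k t) = ∏ j, x (i j) := by
  classical
  let e := Fintype.equivFin (Σ t : Fin d, Fin (k t))
  refine ⟨_, fun j => (e.symm j).1, fun x => ?_⟩
  rw [Equiv.prod_comp e.symm (fun s : (Σ t : Fin d, Fin (k t)) => x s.1)]
  rw [← Finset.univ_sigma_univ, Finset.prod_sigma]
  simp

private lemma integrable_comp {d : ℕ} {Ω' : Type*} [MeasurableSpace Ω'] (μ : Measure Ω')
    [IsProbabilityMeasure μ] {K : Set (Fin d → ℝ)} (hK : IsCompact K)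
    {g : (Fin d → ℝ) → ℝ} (hg : Continuous g)
    {Y : Ω' → Fin d → ℝ} (hY : Measurable Y) (hYK : ∀ ω, Y ω ∈ K) :
    Integrable (fun ω => g (Y ω)) μ := by
  obtain ⟨C, hC⟩ := hK.exists_bound_of_continuousOn hg.continuousOn
  exact (integrable_const C).mono' ((hg.measurable.comp hY).aestronglyMeasurable)
    (Filter.Eventually.of_forall fun ω => hC _ (hYK ω))

private lemma eval_expand {d : ℕ} (p : MvPolynomial (Fin d) ℝ) (x : Fin d → ℝ) :
    MvPolynomial.eval x p
      = ∑ k ∈ p.support, MvPolynomial.coeff k p * ∏ t, x t ^ k t := by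
  rw [MvPolynomial.eval_eq]
  refine Finset.sum_congr rfl fun k _ => ?_
  rw [Finset.prod_subset (Finset.subset_univ k.support)
    (fun t _ ht => by simp [Finsupp.notMem_support_iff.mp ht])]

private lemma monomial_continuous {d : ℕ} (k : Fin d → ℕ) :
    Continuous (fun x : Fin d → ℝ => ∏ t, x t ^ k t) :=
  continuous_finset_prod _ fun t _ => (continuous_apply t).pow _

private lemma integral_eval {d : ℕ} {Ω' : Type*} [MeasurableSpace Ω'] (μ : Measure Ω')
    [IsProbabilityMeasure μ] {K : Set (Fin d → ℝ)} (hK : IsCompact K)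
    (p : MvPolynomial (Fin d) ℝ) {Y : Ω' → Fin d → ℝ}
    (hY : Measurable Y) (hYK : ∀ ω, Y ω ∈ K) :
    ∫ ω, MvPolynomial.eval (Y ω) p ∂μ
      = ∑ k ∈ p.support, MvPolynomial.coeff k p * ∫ ω, ∏ t, Y ω t ^ k t ∂μ := by
  simp only [eval_expand p]
  rw [integral_finset_sum _ fun k _ =>
    ((integrable_comp μ hK (monomial_continuous (k ·)) hY hYK).const_mul
      (MvPolynomial.coeff k p))]
  exact Finset.sum_congr rfl fun k _ => integral_const_mul _ _

private lemma abs_integral_diff_le {d : ℕ} {Ω' : Type*} [MeasurableSpace Ω'] (μ : Measure Ω')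
    [IsProbabilityMeasure μ] {K : Set (Fin d → ℝ)} (hK : IsCompact K)
    (f : BoundedContinuousFunction (Fin d → ℝ) ℝ) (p : MvPolynomial (Fin d) ℝ)
    {Y : Ω' → Fin d → ℝ} (hY : Measurable Y) (hYK : ∀ ω, Y ω ∈ K)
    {ε : ℝ} (hpf : ∀ x ∈ K, |MvPolynomial.eval x p - f x| ≤ ε) :
    |(∫ ω, f (Y ω) ∂μ) - ∫ ω, MvPolynomial.eval (Y ω) p ∂μ| ≤ ε := by
  rw [← integral_sub (integrable_comp μ hK f.continuous hY hYK)
    (integrable_comp μ hK (MvPolynomial.continuous_eval p) hY hYK)]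
  have h := norm_integral_le_of_norm_le_const (μ := μ) (C := ε)
    (f := fun ω => f (Y ω) - MvPolynomial.eval (Y ω) p)
    (Filter.Eventually.of_forall fun ω => by
      rw [Real.norm_eq_abs, abs_sub_comm]; exact hpf _ (hYK ω))
  simpa [Real.norm_eq_abs] using h

/-- Let `X, X_n` be random variables with values in a fixed compact `K ⊆ ℝ^d`. If all
tensor moments (written in coordinates) of `X_n` converge to those of `X`, then `X_n`
converges weakly (in distribution) to `X`: `E[f(X_n)] → E[f(X)]` for every bounded
continuous `f : ℝ^d → ℝ`. -/
theorem stmt2 (d : ℕ) (K : Set (Fin d → ℝ)) (hK : IsCompact K)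
    (Ω : Type*) [MeasurableSpace Ω] (P : Measure Ω) [IsProbabilityMeasure P]
    (Ωn : ℕ → Type*) [∀ n, MeasurableSpace (Ωn n)]
    (Pn : ∀ n, Measure (Ωn n)) [∀ n, IsProbabilityMeasure (Pn n)]
    (X : Ω → Fin d → ℝ) (Xn : ∀ n, Ωn n → Fin d → ℝ)
    (hX : Measurable X) (hXn : ∀ n, Measurable (Xn n))
    (hXK : ∀ ω, X ω ∈ K) (hXnK : ∀ n ω, Xn n ω ∈ K)
    (hmom : ∀ (m : ℕ) (i : Fin m → Fin d),
      Tendsto (fun n => ∫ ω, ∏ j, Xn n ω (i j) ∂(Pn n)) atTop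
        (nhds (∫ ω, ∏ j, X ω (i j) ∂P))) :
    ∀ f : BoundedContinuousFunction (Fin d → ℝ) ℝ,
      Tendsto (fun n => ∫ ω, f (Xn n ω) ∂(Pn n)) atTop (nhds (∫ ω, f (X ω) ∂P)) := by
  classical
  intro f
  -- moments of monomials converge
  have hmon : ∀ k : Fin d → ℕ,
      Tendsto (fun n => ∫ ω, ∏ t, Xn n ω t ^ k t ∂(Pn n)) atTop
        (nhds (∫ ω, ∏ t, X ω t ^ k t ∂P)) := by
    intro k
    obtain ⟨m, i, hi⟩ := prod_pow_repr d k
    simpa only [hi] using hmom m i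
  -- polynomial moments converge
  have hpoly : ∀ p : MvPolynomial (Fin d) ℝ,
      Tendsto (fun n => ∫ ω, MvPolynomial.eval (Xn n ω) p ∂(Pn n)) atTop
        (nhds (∫ ω, MvPolynomial.eval (X ω) p ∂P)) := by
    intro p
    simp only [fun n => integral_eval (Pn n) hK p (hXn n) (hXnK n),
      integral_eval P hK p hX hXK]
    exact tendsto_finset_sum _ fun k _ => (hmon (k ·)).const_mul _
  -- Stone–Weierstrass on the compact set K
  haveI : CompactSpace K := isCompact_iff_compactSpace.mp hK
  set c : Fin d → C(K, ℝ) := fun i =>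
    ⟨fun x => (x : Fin d → ℝ) i, (continuous_apply i).comp continuous_subtype_val⟩ with hc
  set A : Subalgebra ℝ C(K, ℝ) := (MvPolynomial.aeval c).range with hA
  have hsep : A.SeparatesPoints := by
    intro x y hxy
    have : ∃ i, (x : Fin d → ℝ) i ≠ (y : Fin d → ℝ) i := by
      by_contra h
      push_neg at h
      exact hxy (Subtype.ext (funext h))
    obtain ⟨i, hi⟩ := this
    refine ⟨c i, ?_, hi⟩
    rw [hA]
    simpa using (MvPolynomial.aeval c).mem_range_self (MvPolynomial.X i)
  -- pointwise evaluation of aeval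
  have haeval : ∀ (p : MvPolynomial (Fin d) ℝ) (x : K),
      (MvPolynomial.aeval c p) x = MvPolynomial.eval (x : Fin d → ℝ) p := by
    intro p x
    induction p using MvPolynomial.induction_on with
    | C a => simp [MvPolynomial.algebraMap_eq]
    | add p q hp hq => simp [hp, hq]
    | mul_X p i hp => simp only [map_mul, ContinuousMap.mul_apply, hp]; simp [hc]
  rw [Metric.tendsto_atTop]
  intro ε hε
  have hε4 : 0 < ε / 4 := by linarith
  obtain ⟨⟨g, hgA⟩, hg⟩ := ContinuousMap.exists_mem_subalgebra_near_continuous_of_separatesPoints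
    A hsep (fun x : K => f x) (f.continuous.comp continuous_subtype_val) (ε / 4) hε4
  obtain ⟨p, hp⟩ := hgA
  -- so: ∀ x ∈ K, |eval x p - f x| < ε/4
  have hpf : ∀ x ∈ K, |MvPolynomial.eval x p - f x| < ε / 4 := by
    intro x hx
    have h1 := hg ⟨x, hx⟩
    rwa [show (g : K → ℝ) ⟨x, hx⟩ = MvPolynomial.eval x p by
      rw [← hp]; exact haeval p ⟨x, hx⟩, Real.norm_eq_abs] at h1
  have hpf' : ∀ x ∈ K, |MvPolynomial.eval x p - f x| ≤ ε / 4 :=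
    fun x hx => (hpf x hx).le
  obtain ⟨N, hN⟩ := (Metric.tendsto_atTop.mp (hpoly p)) (ε / 4) hε4
  refine ⟨N, fun n hn => ?_⟩
  have h2 := hN n hn
  rw [Real.dist_eq] at h2 ⊢
  have h1 := abs_integral_diff_le (Pn n) hK f p (hXn n) (hXnK n) hpf'
  have h3 := abs_integral_diff_le P hK f p hX hXK hpf'
  have t1 := abs_sub_le (∫ ω, f (Xn n ω) ∂(Pn n))
    (∫ ω, MvPolynomial.eval (Xn n ω) p ∂(Pn n)) (∫ ω, f (X ω) ∂P)
  have t2 := abs_sub_le (∫ ω, MvPolynomial.eval (Xn n ω) p ∂(Pn n))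
    (∫ ω, MvPolynomial.eval (X ω) p ∂P) (∫ ω, f (X ω) ∂P)
  rw [abs_sub_comm] at h3
  linarith
end

section
/- Define A_d(k) by the recursion A_d(k) = (2d+1)A_d(k−1) − d·A_d(k−2) with A_d(0) = 1, A_d(1) = d+1. Then A_d(k) = 1 + Σ_{n=1}^{k} Σ_{l=1}^{n} C(n,l)·C(k+l−n−1, k−n)·d^{l+k−n}, where C denotes binomial coefficients (with the convention C(−1,0) = 1 and C(a,b) = 0 for b < 0 or b > a when a ≥ 0). -/
open Finset

/-- `cc k t` is `c(k, t+1) = Σ_{j=0}^{t} C(t,j) C(k-j, t+1-j)` as an integer. -/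
private def cc (k t : ℕ) : ℤ :=
  ∑ j ∈ Finset.range (t + 1), (t.choose j : ℤ) * ((k - j).choose (t + 1 - j) : ℤ)

private lemma cc_zero {k t : ℕ} (h : k ≤ t) : cc k t = 0 := by
  unfold cc
  apply Finset.sum_eq_zero
  intro j hj
  rw [Finset.mem_range] at hj
  have : (k - j).choose (t + 1 - j) = 0 :=
    Nat.choose_eq_zero_of_lt (by omega)
  simp [this]

private lemma cc_base (k : ℕ) : cc k 0 = (k : ℤ) := by
  simp [cc]

private lemma cc_step1 (k m : ℕ) (h : m ≤ k) :
    cc (k + 1) m =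
      (∑ i ∈ Finset.range (m + 1), (m.choose i : ℤ) * ((k - i).choose (m - i) : ℤ))
        + cc k m := by
  unfold cc
  rw [← Finset.sum_add_distrib]
  apply Finset.sum_congr rfl
  intro i hi
  rw [Finset.mem_range] at hi
  have h1 : k + 1 - i = (k - i) + 1 := by omega
  have h2 : m + 1 - i = (m - i) + 1 := by omega
  rw [h1, h2, Nat.choose_succ_succ', ← h2]
  push_cast
  ring

private lemma cc_step2 (k m : ℕ) :
    (∑ j ∈ Finset.range (m + 2), ((m + 1).choose j : ℤ) * ((k + 1 - j).choose (m + 1 - j) : ℤ))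
      = (∑ i ∈ Finset.range (m + 1), (m.choose i : ℤ) * ((k - i).choose (m - i) : ℤ))
        + cc (k + 1) m := by
  rw [Finset.sum_range_succ' _ (m + 1)]
  have key : ∀ i ∈ Finset.range (m + 1),
      ((m + 1).choose (i+1) : ℤ) * ((k + 1 - (i+1)).choose (m + 1 - (i+1)) : ℤ)
        = (m.choose i : ℤ) * ((k - i).choose (m - i) : ℤ)
          + (m.choose (i+1) : ℤ) * ((k - i).choose (m - i) : ℤ) := by
    intro i hi
    rw [Finset.mem_range] at hi
    have h1 : k + 1 - (i + 1) = k - i := by omega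
    have h2 : m + 1 - (i + 1) = m - i := by omega
    rw [h1, h2, Nat.choose_succ_succ']
    push_cast
    ring
  rw [Finset.sum_congr rfl key, Finset.sum_add_distrib]
  have hB : (∑ i ∈ Finset.range (m + 1),
      (m.choose (i+1) : ℤ) * ((k - i).choose (m - i) : ℤ))
      = ∑ i ∈ Finset.range m, (m.choose (i+1) : ℤ) * ((k - i).choose (m - i) : ℤ) := by
    rw [Finset.sum_range_succ]
    simp
  rw [hB]
  have hcc : cc (k + 1) m
      = (∑ i ∈ Finset.range m, (m.choose (i+1) : ℤ) * ((k - i).choose (m - i) : ℤ))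
        + ((k + 1).choose (m + 1) : ℤ) := by
    unfold cc
    rw [Finset.sum_range_succ' _ m]
    congr 1
    · apply Finset.sum_congr rfl
      intro i hi
      rw [Finset.mem_range] at hi
      have h1 : k + 1 - (i + 1) = k - i := by omega
      have h2 : m + 1 - (i + 1) = m - i := by omega
      rw [h1, h2]
    · simp
  rw [hcc]
  simp
  ring

private lemma cc_rec (k m : ℕ) (h : m ≤ k) :
    cc (k + 2) (m + 1) = cc (k + 1) (m + 1) + 2 * cc (k + 1) m - cc k m := by
  have main : cc (k + 2) (m + 1)
      = cc (k + 1) (m + 1)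
        + (∑ j ∈ Finset.range (m + 2),
            ((m + 1).choose j : ℤ) * ((k + 1 - j).choose (m + 1 - j) : ℤ)) := by
    unfold cc
    rw [← Finset.sum_add_distrib]
    apply Finset.sum_congr rfl
    intro j hj
    rw [Finset.mem_range] at hj
    have h1 : k + 2 - j = (k + 1 - j) + 1 := by omega
    have h2 : m + 1 + 1 - j = (m + 1 - j) + 1 := by omega
    rw [h1, h2, Nat.choose_succ_succ', ← h2]
    push_cast
    ring
  rw [main, cc_step2, cc_step1 k m h]
  ring

private def S (d : ℤ) (k : ℕ) : ℤ := ∑ t ∈ Finset.range k, d ^ (t + 1) * cc k t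

private lemma S_rec (d : ℤ) (k : ℕ) :
    S d (k + 2) = (2 * d + 1) * S d (k + 1) - d * S d k + d := by
  have h1 : S d (k + 2)
      = (∑ t ∈ Finset.range (k + 1), d ^ (t + 2) * cc (k + 2) (t + 1)) + d * (k + 2) := by
    unfold S
    rw [Finset.sum_range_succ' _ (k + 1)]
    simp [cc_base]
  have h2 : ∀ t ∈ Finset.range (k + 1),
      d ^ (t + 2) * cc (k + 2) (t + 1)
        = d ^ (t + 2) * cc (k + 1) (t + 1) + 2 * (d ^ (t + 2) * cc (k + 1) t)
          - d ^ (t + 2) * cc k t := by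
    intro t ht
    rw [Finset.mem_range] at ht
    rw [cc_rec k t (by omega)]
    ring
  rw [Finset.sum_congr rfl h2] at h1
  have h3 : (∑ t ∈ Finset.range (k + 1), d ^ (t + 2) * cc (k + 1) (t + 1))
      = S d (k + 1) - d * (k + 1) := by
    have : (∑ t ∈ Finset.range (k + 1), d ^ (t + 2) * cc (k + 1) (t + 1))
        = ∑ t ∈ Finset.range k, d ^ (t + 2) * cc (k + 1) (t + 1) := by
      rw [Finset.sum_range_succ, cc_zero (by omega)]
      simp
    rw [this]
    unfold S
    rw [Finset.sum_range_succ' _ k]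
    simp [cc_base]
  have h4 : (∑ t ∈ Finset.range (k + 1), d ^ (t + 2) * cc (k + 1) t)
      = d * S d (k + 1) := by
    unfold S
    rw [Finset.mul_sum]
    apply Finset.sum_congr rfl
    intro t ht
    ring
  have h5 : (∑ t ∈ Finset.range (k + 1), d ^ (t + 2) * cc k t) = d * S d k := by
    rw [Finset.sum_range_succ, cc_zero (le_refl k)]
    unfold S
    rw [Finset.mul_sum]
    rw [mul_zero, add_zero]
    apply Finset.sum_congr rfl
    intro t ht
    ring
  rw [Finset.sum_sub_distrib, Finset.sum_add_distrib, ← Finset.mul_sum] at h1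
  rw [h1, h3, h4, h5]
  ring

private lemma T_eq_S (d : ℤ) (k : ℕ) :
    (∑ n ∈ Finset.Icc 1 k, ∑ l ∈ Finset.Icc 1 n,
      ((n.choose l : ℤ) * ((k + l - n - 1).choose (k - n) : ℤ) * d ^ (l + k - n)))
      = S d k := by
  unfold S cc
  have hrhs : (∑ t ∈ Finset.range k, d ^ (t + 1) *
        ∑ j ∈ Finset.range (t + 1), (t.choose j : ℤ) * ((k - j).choose (t + 1 - j) : ℤ))
      = ∑ t ∈ Finset.range k, ∑ j ∈ Finset.range (t + 1),
          d ^ (t + 1) * ((t.choose j : ℤ) * ((k - j).choose (t + 1 - j) : ℤ)) := by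
    apply Finset.sum_congr rfl
    intro t ht
    rw [Finset.mul_sum]
  rw [hrhs, Finset.sum_sigma', Finset.sum_sigma']
  apply Finset.sum_nbij' (i := fun p => (⟨k + p.2 - p.1 - 1, k - p.1⟩ : Σ _ : ℕ, ℕ))
    (j := fun q => (⟨k - q.2, q.1 + 1 - q.2⟩ : Σ _ : ℕ, ℕ))
  · intro a ha
    simp only [Finset.mem_sigma, Finset.mem_Icc, Finset.mem_range] at ha ⊢
    omega
  · intro a ha
    simp only [Finset.mem_sigma, Finset.mem_Icc, Finset.mem_range] at ha ⊢
    omega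
  · intro a ha
    simp only [Finset.mem_sigma, Finset.mem_Icc] at ha
    ext <;> simp <;> omega
  · intro a ha
    simp only [Finset.mem_sigma, Finset.mem_range] at ha
    ext <;> simp <;> omega
  · intro a ha
    simp only [Finset.mem_sigma, Finset.mem_Icc] at ha
    obtain ⟨⟨h1, h2⟩, h3, h4⟩ := ha
    have e2 : (k + a.2 - a.1 - 1) + 1 - (k - a.1) = a.2 := by omega
    have e3 : k - (k - a.1) = a.1 := by omega
    have e4 : a.2 + k - a.1 = (k + a.2 - a.1 - 1) + 1 := by omega
    show (a.1.choose a.2 : ℤ) * ((k + a.2 - a.1 - 1).choose (k - a.1) : ℤ) * d ^ (a.2 + k - a.1)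
      = d ^ ((k + a.2 - a.1 - 1) + 1) *
        (((k + a.2 - a.1 - 1).choose (k - a.1) : ℤ) *
          (((k - (k - a.1)).choose ((k + a.2 - a.1 - 1) + 1 - (k - a.1))) : ℤ))
    rw [e2, e3, e4]
    ring

/-- The sequence defined by `A_d(k) = (2d+1)A_d(k−1) − d·A_d(k−2)`, `A_d(0)=1`,
`A_d(1)=d+1`, equals the explicit double sum
`1 + Σ_{n=1}^{k} Σ_{l=1}^{n} C(n,l)·C(k+l−n−1, k−n)·d^{l+k−n}`. -/
theorem stmt9 (d : ℕ) (hd : 1 ≤ d) (A : ℕ → ℤ)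
    (hA0 : A 0 = 1) (hA1 : A 1 = (d : ℤ) + 1)
    (hrec : ∀ k, A (k + 2) = (2 * (d : ℤ) + 1) * A (k + 1) - (d : ℤ) * A k) :
    ∀ k, A k = 1 + ∑ n ∈ Finset.Icc 1 k, ∑ l ∈ Finset.Icc 1 n,
      ((n.choose l : ℤ) * ((k + l - n - 1).choose (k - n) : ℤ) * (d : ℤ) ^ (l + k - n)) := by
  have key : ∀ k, A k = 1 + S (d : ℤ) k ∧ A (k + 1) = 1 + S (d : ℤ) (k + 1) := by
    intro k
    induction k with
    | zero =>
      constructor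
      · simp [S, hA0]
      · rw [hA1]
        simp [S, cc_base]
        ring
    | succ n ih =>
      obtain ⟨ih1, ih2⟩ := ih
      refine ⟨ih2, ?_⟩
      rw [hrec n, ih1, ih2, S_rec]
      ring
  intro k
  rw [T_eq_S]
  exact (key k).1
end
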